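/- arXiv:2311.10392 — 2 statements merged into one kernel-verified Lean document; each statement's English description precedes it below -/
import Mathlib

section
/- Let M be a maximal independent set of the Kneser graph on chambers of PG(3,q) and let l be a line. Then the number of chambers of M whose line equals l (the M-weight of l) is one of 0, 1, 2, q+1, 2q+1, or (q+1)^2. -/
open Submodule

/-- A chamber of `PG(3,q)`: a mutually incident point-line-plane triple,
where points, lines and planes are the 1-, 2- and 3-dimensional subspaces
of a 4-dimensional vector space over `F = GF(q)`. -/
structure Chamber (F : Type) [Field F] where
  pt : Submodule F (Fin 4 → F)
  line : Submodule F (Fin 4 → F)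
  plane : Submodule F (Fin 4 → F)
  pt_rank : Module.finrank F pt = 1
  line_rank : Module.finrank F line = 2
  plane_rank : Module.finrank F plane = 3
  pt_le_line : pt ≤ line
  line_le_plane : line ≤ plane

/-- Two chambers are opposite if each point lies outside the other's plane
and the two lines are skew (intersect trivially). -/
def Chamber.Opp {F : Type} [Field F] (c d : Chamber F) : Prop :=
  ¬ c.pt ≤ d.plane ∧ ¬ d.pt ≤ c.plane ∧ c.line ⊓ d.line = ⊥

/-- An independent set of the Kneser graph on chambers: pairwise non-opposite chambers. -/
def IsIndep {F : Type} [Field F] (M : Set (Chamber F)) : Prop :=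
  ∀ c ∈ M, ∀ d ∈ M, ¬ c.Opp d

/-- A maximal independent set of the Kneser graph on chambers. -/
def IsMaxIndep {F : Type} [Field F] (M : Set (Chamber F)) : Prop :=
  IsIndep M ∧ ∀ c : Chamber F, (∀ d ∈ M, ¬ c.Opp d) → c ∈ M

/-- The `M`-weight of a line `l`: the number of chambers of `M` whose line is `l`. -/
noncomputable def wLine {F : Type} [Field F] (M : Set (Chamber F))
    (l : Submodule F (Fin 4 → F)) : ℕ :=
  {c ∈ M | c.line = l}.ncard

/-- The `M`-weight of an incident line-plane pair. -/
noncomputable def wPair {F : Type} [Field F] (M : Set (Chamber F))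
    (l π : Submodule F (Fin 4 → F)) : ℕ :=
  {c ∈ M | c.line = l ∧ c.plane = π}.ncard

/-- The `M`-weight of an incident point-line pair. -/
noncomputable def wPt {F : Type} [Field F] (M : Set (Chamber F))
    (P l : Submodule F (Fin 4 → F)) : ℕ :=
  {c ∈ M | c.pt = P ∧ c.line = l}.ncard

/-- A `π`-line of `M`: a line of weight `≠ (q+1)^2` lying in a plane `π` such that
the pair `(l, π)` has weight `q+1`. -/
def IsPiLine {F : Type} [Field F] [Fintype F] (M : Set (Chamber F))
    (l : Submodule F (Fin 4 → F)) : Prop :=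
  Module.finrank F l = 2 ∧ wLine M l ≠ (Fintype.card F + 1)^2 ∧
    ∃ π : Submodule F (Fin 4 → F), Module.finrank F π = 3 ∧ l ≤ π ∧ wPair M l π = Fintype.card F + 1

/-- A `P`-line of `M`: a line of weight `≠ (q+1)^2` through a point `P` such that
the pair `(P, l)` has weight `q+1`. -/
def IsPLine {F : Type} [Field F] [Fintype F] (M : Set (Chamber F))
    (l : Submodule F (Fin 4 → F)) : Prop :=
  Module.finrank F l = 2 ∧ wLine M l ≠ (Fintype.card F + 1)^2 ∧
    ∃ P : Submodule F (Fin 4 → F), Module.finrank F P = 1 ∧ P ≤ l ∧ wPt M P l = Fintype.card F + 1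

/-!
Chambers on a line `l` are determined by their point on `l` and their plane through `l`, so
they form a `(q+1) × (q+1)` grid. If the chamber `(P₀, l, π₀)` is not in `M`, maximality gives
`d ∈ M` opposite it; since the line of `d` is skew to `l`, the chambers on `l` not opposite `d`
are those with point `l ∩ d.plane` or with plane `⟨d.pt, l⟩`, a cross in the grid whose centre
shares neither coordinate with `(P₀, π₀)`. A subset of a grid that lies in such a cross around
each of its missing cells has at most two cells, or is a full row, a full column, a full cross
or the whole grid.
-/

open Module Submodule

section Grid

variable {α β : Type*} {A : Set α} {B : Set β} {S : Set (α × β)}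

def Prod.cross (c : α × β) : Set (α × β) := {x | x.1 = c.1 ∨ x.2 = c.2}

def CrossCovered (A : Set α) (B : Set β) (S : Set (α × β)) : Prop :=
  ∀ p ∈ A ×ˢ B \ S, ∃ c ∈ A ×ˢ B, c.1 ≠ p.1 ∧ c.2 ≠ p.2 ∧ S ⊆ c.cross

lemma Prod.swap_mem_cross_swap {c x : α × β} : x.swap ∈ c.swap.cross ↔ x ∈ c.cross :=
  or_comm

lemma CrossCovered.swap (hS : CrossCovered A B S) : CrossCovered B A (Prod.swap ⁻¹' S) := by
  rintro p ⟨hpBA, hpS⟩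
  obtain ⟨c, hcAB, h1, h2, hSc⟩ := hS p.swap ⟨⟨hpBA.2, hpBA.1⟩, hpS⟩
  exact ⟨c.swap, ⟨hcAB.2, hcAB.1⟩, h2, h1,
    fun x hx => Prod.swap_mem_cross_swap.2 (by simpa using hSc hx)⟩

lemma Set.ncard_le_two_of_subset_cross {c d : α × β} (h1 : c.1 ≠ d.1) (h2 : c.2 ≠ d.2)
    (hc : S ⊆ c.cross) (hd : S ⊆ d.cross) : S.ncard ≤ 2 := by
  have hsub : S ⊆ {(c.1, d.2), (d.1, c.2)} := by
    intro x hx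
    rcases hc hx with hxc | hxc <;> rcases hd hx with hxd | hxd
    · exact absurd (hxc.symm.trans hxd) h1
    · exact Or.inl (Prod.ext hxc hxd)
    · exact Or.inr (Prod.ext hxd hxc)
    · exact absurd (hxc.symm.trans hxd) h2
  exact (Set.ncard_le_ncard hsub).trans ((Set.ncard_insert_le _ _).trans (by simp))

lemma Prod.ncard_cross_inter_prod {c : α × β} (hc : c ∈ A ×ˢ B) (hA : A.Finite)
    (hB : B.Finite) :
    (c.cross ∩ A ×ˢ B).ncard = A.ncard + B.ncard - 1 := by
  have hunion : c.cross ∩ A ×ˢ B = A ×ˢ {c.2} ∪ {c.1} ×ˢ B := by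
    ext x
    simp only [Prod.cross, Set.mem_inter_iff, Set.mem_ofPred_eq, Set.mem_union, Set.mem_prod,
      Set.mem_singleton_iff]
    constructor
    · rintro ⟨h | h, hA, hB⟩ <;> simp_all
    · rintro (⟨hA, h⟩ | ⟨h, hB⟩) <;> simp_all
  have hinter : A ×ˢ {c.2} ∩ {c.1} ×ˢ B = {c} := by
    rw [Set.prod_inter_prod, Set.inter_singleton_of_mem hc.1,
      Set.singleton_inter_of_mem hc.2, Set.singleton_prod_singleton]
  have := Set.ncard_union_add_ncard_inter (A ×ˢ {c.2}) ({c.1} ×ˢ B)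
    (hA.prod (Set.finite_singleton _)) ((Set.finite_singleton _).prod hB)
  rw [hinter, Set.ncard_prod, Set.ncard_prod] at this
  simp only [Set.ncard_singleton, mul_one, one_mul] at this
  rw [hunion]
  omega

lemma CrossCovered.ncard_of_subset_column (hS : CrossCovered A B S) (hSAB : S ⊆ A ×ˢ B)
    {b : β} (hb : b ∈ B) (hcol : ∀ x ∈ S, x.2 = b) :
    S.ncard ≤ 1 ∨ S.ncard = A.ncard := by
  by_cases hfull : A ×ˢ {b} ⊆ S
  · have hSeq : S = A ×ˢ {b} :=
      Set.Subset.antisymm (fun x hx => ⟨(hSAB hx).1, hcol x hx⟩) hfull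
    rw [hSeq, Set.ncard_prod, Set.ncard_singleton, mul_one]
    exact Or.inr rfl
  obtain ⟨p, hp, hpS⟩ := Set.not_subset.1 hfull
  obtain ⟨c, -, -, hc2, hSc⟩ := hS p ⟨⟨hp.1, hp.2 ▸ hb⟩, hpS⟩
  have hsub : S ⊆ {(c.1, b)} := fun x hx =>
    Prod.ext (((hSc hx).resolve_right (by rw [hcol x hx, ← hp.2]; exact hc2.symm))) (hcol x hx)
  exact Or.inl ((Set.ncard_le_ncard hsub).trans (Set.ncard_singleton _).le)

lemma CrossCovered.ncard_of_notMem_row (hS : CrossCovered A B S) (hSAB : S ⊆ A ×ˢ B)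
    {c p : α × β} (hc : c ∈ S) (hSc : S ⊆ c.cross) (hp : p ∈ A ×ˢ B \ S)
    (hpc : p.1 = c.1) :
    S.ncard ≤ 1 ∨ S.ncard = A.ncard := by
  obtain ⟨d, -, hd1, -, hSd⟩ := hS p hp
  have hdc : d.1 ≠ c.1 := hpc ▸ hd1
  have hd2 : c.2 = d.2 := (hSd hc).resolve_left hdc.symm
  refine hS.ncard_of_subset_column hSAB (hSAB hc).2 fun x hx => ?_
  by_contra hx2
  have hx1 : x.1 = c.1 := (hSc hx).resolve_right hx2
  exact hdc.symm (hx1.symm.trans ((hSd hx).resolve_right (hd2 ▸ hx2)))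

theorem CrossCovered.ncard_cases (hS : CrossCovered A B S) (hSAB : S ⊆ A ×ˢ B)
    (hA : A.Finite) (hB : B.Finite) :
    S.ncard ≤ 2 ∨ S.ncard = A.ncard ∨ S.ncard = B.ncard ∨
      S.ncard = A.ncard + B.ncard - 1 ∨ S.ncard = A.ncard * B.ncard := by
  by_cases hfull : A ×ˢ B ⊆ S
  · rw [hSAB.antisymm hfull, Set.ncard_prod]
    omega
  obtain ⟨p, hpAB, hpS⟩ := Set.not_subset.1 hfull
  obtain ⟨c, hcAB, -, -, hSc⟩ := hS p ⟨hpAB, hpS⟩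
  by_cases hc : c ∉ S
  · obtain ⟨d, -, hd1, hd2, hSd⟩ := hS c ⟨hcAB, hc⟩
    exact Or.inl (Set.ncard_le_two_of_subset_cross hd1.symm hd2.symm hSc hSd)
  rw [not_not] at hc
  by_cases hcross : c.cross ∩ A ×ˢ B ⊆ S
  · rw [(Set.subset_inter hSc hSAB).antisymm hcross, Prod.ncard_cross_inter_prod hcAB hA hB]
    omega
  obtain ⟨q, ⟨hqc, hqAB⟩, hqS⟩ := Set.not_subset.1 hcross
  rcases hqc with hq1 | hq2
  · rcases hS.ncard_of_notMem_row hSAB hc hSc ⟨hqAB, hqS⟩ hq1 with h | h <;> omega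
  · have hswap := hS.swap.ncard_of_notMem_row (c := c.swap) (p := q.swap)
      (fun x hx => ⟨(hSAB hx).2, (hSAB hx).1⟩) (by simpa using hc)
      (fun x hx => Prod.swap_mem_cross_swap.2 (hSc hx))
      ⟨by simpa [and_comm] using hqAB, by simpa using hqS⟩ hq2
    rw [← Set.image_swap_eq_preimage_swap, Set.ncard_image_of_injective _ Prod.swap_injective]
      at hswap
    omega

end Grid

section Counting

variable {F V : Type*} [Field F] [AddCommGroup V] [Module F V]

lemma finrank_comap_mkQ [FiniteDimensional F V] (p : Submodule F V) (T : Submodule F (V ⧸ p)) :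
    finrank F (T.comap p.mkQ) = finrank F T + finrank F p := by
  have h := LinearMap.finrank_range_add_finrank_ker (p.mkQ.domRestrict (T.comap p.mkQ))
  rw [LinearMap.range_domRestrict, map_comap_eq_of_surjective p.mkQ_surjective,
    LinearMap.ker_domRestrict, ker_mkQ, (comapSubtypeEquivOfLe (le_comap_mkQ p T)).finrank_eq] at h
  exact h.symm

def pointsOn (W : Submodule F V) : Set (Submodule F V) := {P | finrank F P = 1 ∧ P ≤ W}

def planesThrough (l : Submodule F V) : Set (Submodule F V) :=
  {π | finrank F π = finrank F l + 1 ∧ l ≤ π}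

variable [Finite F]

lemma ncard_finrank_eq_one_of_finrank_eq_two (h : finrank F V = 2) :
    {P : Submodule F V | finrank F P = 1}.ncard = Nat.card F + 1 := by
  rw [← Nat.card_coe_set_eq, ← Projectivization.card_of_finrank_two F V h]
  exact Nat.card_congr (Projectivization.equivSubmodule F V).symm

lemma ncard_pointsOn {W : Submodule F V} (hW : finrank F W = 2) :
    (pointsOn W).ncard = Nat.card F + 1 := by
  have himage : map W.subtype '' {P : Submodule F W | finrank F P = 1} = pointsOn W := by
    ext P
    refine ⟨?_, fun ⟨hP, hPW⟩ => ⟨comap W.subtype P, ?_, ?_⟩⟩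
    · rintro ⟨P, hP, rfl⟩
      exact ⟨(finrank_map_subtype_eq W P).trans hP, map_subtype_le W P⟩
    · rwa [Set.mem_ofPred_eq, ← finrank_map_subtype_eq, map_comap_subtype, inf_eq_right.2 hPW]
    · rw [map_comap_subtype, inf_eq_right.2 hPW]
  rw [← himage, Set.ncard_image_of_injective _ (map_injective_of_injective W.injective_subtype),
    ncard_finrank_eq_one_of_finrank_eq_two hW]

lemma ncard_planesThrough [FiniteDimensional F V] {l : Submodule F V}
    (hl : finrank F V = finrank F l + 2) : (planesThrough l).ncard = Nat.card F + 1 := by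
  have himage : comap l.mkQ '' {T : Submodule F (V ⧸ l) | finrank F T = 1} = planesThrough l := by
    ext π
    refine ⟨?_, fun ⟨hπ, hlπ⟩ => ⟨map l.mkQ π, ?_, ?_⟩⟩
    · rintro ⟨T, hT, rfl⟩
      exact ⟨by rw [finrank_comap_mkQ, hT, add_comm], le_comap_mkQ l T⟩
    · have := finrank_comap_mkQ l (map l.mkQ π)
      rw [comap_map_mkQ, sup_eq_right.2 hlπ] at this
      exact (by omega : finrank F (map l.mkQ π) = 1)
    · rw [comap_map_mkQ, sup_eq_right.2 hlπ]
  have hQ : finrank F (V ⧸ l) = 2 := by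
    have := l.finrank_quotient_add_finrank
    omega
  rw [← himage, Set.ncard_image_of_injective _ (comap_injective_of_surjective l.mkQ_surjective),
    ncard_finrank_eq_one_of_finrank_eq_two hQ]

end Counting

namespace Chamber

variable {F : Type} [Field F]

theorem ext {c d : Chamber F} (hpt : c.pt = d.pt) (hline : c.line = d.line)
    (hplane : c.plane = d.plane) : c = d := by
  cases c; cases d; cases hpt; cases hline; cases hplane; rfl

lemma exists_cross_of_opp {c d : Chamber F} (hcd : c.Opp d) :
    ∃ P ∈ pointsOn c.line, ∃ π ∈ planesThrough c.line, P ≠ c.pt ∧ π ≠ c.plane ∧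
      ∀ e : Chamber F, e.line = c.line → ¬ e.Opp d → e.pt = P ∨ e.plane = π := by
  obtain ⟨hcpt, hdpt, hskew⟩ := hcd
  have hsup : c.line ⊔ d.line = ⊤ := by
    apply Submodule.eq_top_of_finrank_eq
    have := Submodule.finrank_sup_add_finrank_inf_eq c.line d.line
    rw [hskew, finrank_bot, c.line_rank, d.line_rank] at this
    rw [finrank_fin_fun]
    omega
  have hP : finrank F ↥(c.line ⊓ d.plane) = 1 := by
    have := Submodule.finrank_sup_add_finrank_inf_eq c.line d.plane
    have htop : c.line ⊔ d.plane = ⊤ :=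
      eq_top_iff.2 (hsup ▸ sup_le_sup_left d.line_le_plane _)
    rw [htop, finrank_top, finrank_fin_fun, c.line_rank, d.plane_rank] at this
    omega
  have hπ : finrank F ↥(d.pt ⊔ c.line) = 3 := by
    have hdisj : d.pt ⊓ c.line = ⊥ :=
      eq_bot_iff.2 (hskew ▸ inf_comm c.line d.line ▸ inf_le_inf_right _ d.pt_le_line)
    have := Submodule.finrank_sup_add_finrank_inf_eq d.pt c.line
    rw [hdisj, finrank_bot, d.pt_rank, c.line_rank] at this
    omega
  refine ⟨_, ⟨hP, inf_le_left⟩, _, ⟨hπ.trans (by rw [c.line_rank]), le_sup_right⟩,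
    fun h => hcpt (h ▸ inf_le_right), fun h => hdpt (h ▸ le_sup_left), fun e he hed => ?_⟩
  have hinc : e.pt ≤ d.plane ∨ d.pt ≤ e.plane := by
    by_contra! h
    exact hed ⟨h.1, h.2, he ▸ hskew⟩
  rcases hinc with h | h
  · exact Or.inl (Submodule.eq_of_le_of_finrank_le (le_inf (he ▸ e.pt_le_line) h)
      (hP.trans e.pt_rank.symm).le)
  · exact Or.inr (Submodule.eq_of_le_of_finrank_le (sup_le h (he ▸ e.line_le_plane))
      (e.plane_rank.trans hπ.symm).le).symm

end Chamber

section Weight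

variable {F : Type} [Field F]

def flagsOn (M : Set (Chamber F)) (l : Submodule F (Fin 4 → F)) :
    Set (Submodule F (Fin 4 → F) × Submodule F (Fin 4 → F)) :=
  (fun c : Chamber F => (c.pt, c.plane)) '' {c ∈ M | c.line = l}

variable {M : Set (Chamber F)} {l : Submodule F (Fin 4 → F)}

lemma wLine_eq_ncard_flagsOn : wLine M l = (flagsOn M l).ncard := by
  refine (Set.InjOn.ncard_image ?_).symm
  rintro c ⟨-, hc⟩ d ⟨-, hd⟩ h
  exact Chamber.ext (congrArg Prod.fst h) (hc.trans hd.symm) (congrArg Prod.snd h)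

lemma flagsOn_subset :
    flagsOn M l ⊆ pointsOn l ×ˢ planesThrough l := by
  rintro _ ⟨c, ⟨-, rfl⟩, rfl⟩
  exact ⟨⟨c.pt_rank, c.pt_le_line⟩, by rw [c.plane_rank, c.line_rank], c.line_le_plane⟩

lemma IsMaxIndep.crossCovered_flagsOn (hM : IsMaxIndep M) (hl : finrank F l = 2) :
    CrossCovered (pointsOn l) (planesThrough l) (flagsOn M l) := by
  rintro ⟨P₀, π₀⟩ ⟨⟨⟨hP₀, hP₀l⟩, ⟨hπ₀, hlπ₀⟩⟩, hnot⟩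
  let c₀ : Chamber F := ⟨P₀, l, π₀, hP₀, hl, by rw [hπ₀, hl], hP₀l, hlπ₀⟩
  obtain ⟨d, hdM, hopp⟩ : ∃ d ∈ M, c₀.Opp d := by
    by_contra! h
    exact hnot ⟨c₀, ⟨hM.2 c₀ h, rfl⟩, rfl⟩
  obtain ⟨P, hP, π, hπ, hPP₀, hππ₀, hcross⟩ := c₀.exists_cross_of_opp hopp
  refine ⟨(P, π), ⟨hP, hπ⟩, hPP₀, hππ₀, ?_⟩
  rintro _ ⟨e, ⟨heM, hel⟩, rfl⟩
  exact hcross e hel (hM.1 e heM d hdM)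

end Weight

/-- The `M`-weight of a line is one of `0, 1, 2, q+1, 2q+1, (q+1)^2`. -/
theorem line_weight_cases {F : Type} [Field F] [Fintype F] {q : ℕ}
    (hq : Fintype.card F = q)
    (M : Set (Chamber F)) (hM : IsMaxIndep M)
    (l : Submodule F (Fin 4 → F)) (hl : Module.finrank F l = 2) :
    wLine M l = 0 ∨ wLine M l = 1 ∨ wLine M l = 2 ∨
    wLine M l = q + 1 ∨ wLine M l = 2*q + 1 ∨ wLine M l = (q + 1)^2 := by
  have hA : (pointsOn l).ncard = q + 1 := by
    rw [ncard_pointsOn hl, Nat.card_eq_fintype_card, hq]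
  have hB : (planesThrough l).ncard = q + 1 := by
    rw [ncard_planesThrough (by rw [finrank_fin_fun, hl]), Nat.card_eq_fintype_card, hq]
  have hcases := (hM.crossCovered_flagsOn hl).ncard_cases flagsOn_subset
    (Set.finite_of_ncard_pos (by omega)) (Set.finite_of_ncard_pos (by omega))
  rw [hA, hB, ← wLine_eq_ncard_flagsOn, ← sq] at hcases
  omega
end

section
/- Let M be a maximal independent set of the Kneser graph on chambers of PG(3,q). Every line of M-weight 2 meets every line of M-weight greater than 2. -/
open Submodule

section Helpers

variable {F : Type} [Field F]

lemma chamber_ext' {c d : Chamber F} (h1 : c.pt = d.pt) (h2 : c.line = d.line)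
    (h3 : c.plane = d.plane) : c = d := by
  cases c; cases d; simp_all

lemma finrank_sup_of_inf_bot {s t : Submodule F (Fin 4 → F)} (h : s ⊓ t = ⊥) :
    Module.finrank F ↥(s ⊔ t) = Module.finrank F s + Module.finrank F t := by
  have h2 := Submodule.finrank_sup_add_finrank_inf_eq s t
  rw [h, finrank_bot] at h2
  omega

lemma point_not_le_disjoint {P A B : Submodule F (Fin 4 → F)} (hP : Module.finrank F P = 1)
    (hA : P ≤ A) (hB : P ≤ B) (h : A ⊓ B = ⊥) : False := by
  have h1 : P = ⊥ := le_bot_iff.mp (h ▸ le_inf hA hB)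
  rw [h1, finrank_bot] at hP
  omega

lemma not_sup_le_plane {l₁ l₂ β : Submodule F (Fin 4 → F)} (hbot : l₁ ⊓ l₂ = ⊥)
    (h₁ : Module.finrank F l₁ = 2) (h₂ : Module.finrank F l₂ = 2)
    (hβ : Module.finrank F β = 3) (ha : l₁ ≤ β) (hb : l₂ ≤ β) : False := by
  have h4 := finrank_sup_of_inf_bot hbot
  have h5 := Submodule.finrank_mono (sup_le ha hb)
  omega

lemma inf_planes {l α α' : Submodule F (Fin 4 → F)} (hl : Module.finrank F l = 2)
    (ha : Module.finrank F α = 3) (ha' : Module.finrank F α' = 3)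
    (h1 : l ≤ α) (h2 : l ≤ α') (hne : α ≠ α') : α ⊓ α' = l := by
  rcases le_or_gt (Module.finrank F ↥(α ⊓ α')) 2 with h | h
  · exact (Submodule.eq_of_le_of_finrank_le (le_inf h1 h2) (hl ▸ h)).symm
  · exfalso
    have e1 : α ⊓ α' = α := Submodule.eq_of_le_of_finrank_le inf_le_left (by omega)
    have e2 : α ⊓ α' = α' := Submodule.eq_of_le_of_finrank_le inf_le_right (by omega)
    exact hne (e1 ▸ e2)

lemma sup_points {P P' l : Submodule F (Fin 4 → F)} (hP : Module.finrank F P = 1)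
    (hP' : Module.finrank F P' = 1) (_hl : Module.finrank F l = 2)
    (h1 : P ≤ l) (h2 : P' ≤ l) (hne : P ≠ P') : P ⊔ P' = l := by
  rcases le_or_gt (Module.finrank F ↥(P ⊔ P')) 1 with h | h
  · exact absurd ((Submodule.eq_of_le_of_finrank_le le_sup_left (hP ▸ h)).trans
      (Submodule.eq_of_le_of_finrank_le le_sup_right (hP' ▸ h)).symm) hne
  · exact Submodule.eq_of_le_of_finrank_le (sup_le h1 h2) (by omega)

lemma plane_eq_sup {P l₂ β : Submodule F (Fin 4 → F)} (hP : Module.finrank F P = 1)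
    (h2 : Module.finrank F l₂ = 2) (hβ : Module.finrank F β = 3)
    (hPβ : P ≤ β) (hl₂β : l₂ ≤ β) (hdisj : P ⊓ l₂ = ⊥) : β = P ⊔ l₂ :=
  (Submodule.eq_of_le_of_finrank_le (sup_le hPβ hl₂β)
    (by rw [finrank_sup_of_inf_bot hdisj, hP, h2, hβ])).symm

lemma pt_eq_inf {Q l₁ l₂ α : Submodule F (Fin 4 → F)} (hQ : Module.finrank F Q = 1)
    (h₁ : Module.finrank F l₁ = 2) (h₂ : Module.finrank F l₂ = 2)
    (hα : Module.finrank F α = 3) (hl₁α : l₁ ≤ α) (hbot : l₁ ⊓ l₂ = ⊥)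
    (hQα : Q ≤ α) (hQl₂ : Q ≤ l₂) : Q = α ⊓ l₂ := by
  have hne : ¬ l₂ ≤ α := fun h => not_sup_le_plane hbot h₁ h₂ hα hl₁α h
  have hle : Module.finrank F ↥(α ⊓ l₂) ≤ 1 := by
    by_contra h
    push_neg at h
    have he : α ⊓ l₂ = l₂ := Submodule.eq_of_le_of_finrank_le inf_le_right (by omega)
    exact hne (he ▸ inf_le_left)
  exact Submodule.eq_of_le_of_finrank_le (le_inf hQα hQl₂) (hQ ▸ hle)

lemma inf_span_singleton_eq_bot {s : Submodule F (Fin 4 → F)} {w : Fin 4 → F} (hw : w ∉ s) :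
    s ⊓ Submodule.span F {w} = ⊥ := by
  rw [eq_bot_iff]
  rintro x ⟨hx1, hx2⟩
  obtain ⟨a, rfl⟩ := Submodule.mem_span_singleton.mp hx2
  rcases eq_or_ne a 0 with rfl | ha
  · simp
  · exfalso
    have : a⁻¹ • a • w ∈ s := s.smul_mem a⁻¹ hx1
    rw [smul_smul, inv_mul_cancel₀ ha, one_smul] at this
    exact hw this

lemma finrank_sup_span {s : Submodule F (Fin 4 → F)} {w : Fin 4 → F} (hw : w ∉ s) :
    Module.finrank F ↥(s ⊔ Submodule.span F {w}) = Module.finrank F s + 1 := by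
  have hw0 : w ≠ 0 := fun h => hw (h ▸ s.zero_mem)
  rw [finrank_sup_of_inf_bot (inf_span_singleton_eq_bot hw), finrank_span_singleton hw0]

lemma third_plane {l α α' : Submodule F (Fin 4 → F)} (hl : Module.finrank F l = 2)
    (ha : Module.finrank F α = 3) (ha' : Module.finrank F α' = 3)
    (h1 : l ≤ α) (h2 : l ≤ α') (hne : α ≠ α') :
    ∃ β : Submodule F (Fin 4 → F), Module.finrank F β = 3 ∧ l ≤ β ∧ β ≠ α ∧ β ≠ α' := by
  have hlt : l < α := lt_of_le_of_ne h1 (fun h => by rw [← h, hl] at ha; omega)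
  have hlt' : l < α' := lt_of_le_of_ne h2 (fun h => by rw [← h, hl] at ha'; omega)
  obtain ⟨w, hwα, hwl⟩ := SetLike.exists_of_lt hlt
  obtain ⟨w', hwα', hwl'⟩ := SetLike.exists_of_lt hlt'
  have hαeq : α = l ⊔ Submodule.span F {w} :=
    (Submodule.eq_of_le_of_finrank_le (sup_le h1 (by rwa [Submodule.span_singleton_le_iff_mem]))
      (by rw [finrank_sup_span hwl, hl, ha])).symm
  have hα'eq : α' = l ⊔ Submodule.span F {w'} :=
    (Submodule.eq_of_le_of_finrank_le (sup_le h2 (by rwa [Submodule.span_singleton_le_iff_mem]))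
      (by rw [finrank_sup_span hwl', hl, ha'])).symm
  have hsum : w + w' ∉ l := by
    intro hmem
    have hwin : w ∈ α' := by
      have : (w + w') - w' ∈ α' := sub_mem (h2 hmem) hwα'
      simpa using this
    have : α ≤ α' := hαeq ▸ sup_le h2 (by rwa [Submodule.span_singleton_le_iff_mem])
    exact hne (Submodule.eq_of_le_of_finrank_le this (by omega))
  refine ⟨l ⊔ Submodule.span F {w + w'}, by rw [finrank_sup_span hsum, hl], le_sup_left, ?_, ?_⟩
  · intro hEq
    have hmem : w + w' ∈ α := hEq ▸ (le_sup_right : Submodule.span F {w + w'} ≤ _) (Submodule.mem_span_singleton_self _)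
    have hw'in : w' ∈ α := by
      have : (w + w') - w ∈ α := sub_mem hmem hwα
      simpa using this
    have : α' ≤ α := hα'eq ▸ sup_le h1 (by rwa [Submodule.span_singleton_le_iff_mem])
    exact hne (Submodule.eq_of_le_of_finrank_le this (by omega)).symm
  · intro hEq
    have hmem : w + w' ∈ α' := hEq ▸ (le_sup_right : Submodule.span F {w + w'} ≤ _) (Submodule.mem_span_singleton_self _)
    have hwin : w ∈ α' := by
      have : (w + w') - w' ∈ α' := sub_mem hmem hwα'
      simpa using this
    have : α ≤ α' := hαeq ▸ sup_le h2 (by rwa [Submodule.span_singleton_le_iff_mem])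
    exact hne (Submodule.eq_of_le_of_finrank_le this (by omega))

lemma third_point {P P' l : Submodule F (Fin 4 → F)} (hP : Module.finrank F P = 1)
    (hP' : Module.finrank F P' = 1) (_hl : Module.finrank F l = 2)
    (h1 : P ≤ l) (h2 : P' ≤ l) (hne : P ≠ P') :
    ∃ Q : Submodule F (Fin 4 → F), Module.finrank F Q = 1 ∧ Q ≤ l ∧ Q ≠ P ∧ Q ≠ P' := by
  have hPbot : P ≠ ⊥ := fun h => by rw [h, finrank_bot] at hP; omega
  have hP'bot : P' ≠ ⊥ := fun h => by rw [h, finrank_bot] at hP'; omega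
  obtain ⟨u, hu, hu0⟩ := Submodule.exists_mem_ne_zero_of_ne_bot hPbot
  obtain ⟨v, hv, hv0⟩ := Submodule.exists_mem_ne_zero_of_ne_bot hP'bot
  have hPeq : P = Submodule.span F {u} :=
    (Submodule.eq_of_le_of_finrank_le (by rwa [Submodule.span_singleton_le_iff_mem])
      (by rw [finrank_span_singleton hu0, hP])).symm
  have hP'eq : P' = Submodule.span F {v} :=
    (Submodule.eq_of_le_of_finrank_le (by rwa [Submodule.span_singleton_le_iff_mem])
      (by rw [finrank_span_singleton hv0, hP'])).symm
  have hvP : v ∉ P := by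
    intro hvP
    exact hne (Submodule.eq_of_le_of_finrank_le
      (hP'eq ▸ (by rwa [Submodule.span_singleton_le_iff_mem])) (by omega)).symm
  have huv0 : u + v ≠ 0 := by
    intro h
    have hveq : v = -u := eq_neg_of_add_eq_zero_right h
    exact hvP (hveq ▸ P.neg_mem hu)
  refine ⟨Submodule.span F {u + v}, finrank_span_singleton huv0,
    (Submodule.span_singleton_le_iff_mem _ _).mpr (l.add_mem (h1 hu) (h2 hv)), ?_, ?_⟩
  · intro hEq
    have hmem : u + v ∈ P := hEq ▸ Submodule.mem_span_singleton_self _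
    exact hvP (by simpa using P.sub_mem hmem hu)
  · intro hEq
    have hmem : u + v ∈ P' := hEq ▸ Submodule.mem_span_singleton_self _
    have huP' : u ∈ P' := by simpa using P'.sub_mem hmem hv
    exact hne (Submodule.eq_of_le_of_finrank_le
      (hPeq ▸ ((Submodule.span_singleton_le_iff_mem _ _).mpr huP')) (by omega))

end Helpers


/-- Every line of `M`-weight `2` meets every line of `M`-weight greater than `2`. -/
theorem weight_two_meets_heavy {F : Type} [Field F] [Fintype F]
    (M : Set (Chamber F)) (hM : IsMaxIndep M)
    (l₁ l₂ : Submodule F (Fin 4 → F))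
    (h₁ : Module.finrank F l₁ = 2) (h₂ : Module.finrank F l₂ = 2)
    (hw₁ : wLine M l₁ = 2) (hw₂ : 2 < wLine M l₂) :
    l₁ ⊓ l₂ ≠ ⊥ := by
  intro hbot
  classical
  have hw₁' : {c ∈ M | c.line = l₁}.ncard = 2 := hw₁
  obtain ⟨c, c', hcc', hset⟩ := Set.ncard_eq_two.mp hw₁'
  have hcmem : c ∈ {d ∈ M | d.line = l₁} := by rw [hset]; simp
  have hc'mem : c' ∈ {d ∈ M | d.line = l₁} := by rw [hset]; simp
  obtain ⟨hcM, hcl⟩ := hcmem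
  obtain ⟨hc'M, hc'l⟩ := hc'mem
  have honly : ∀ d : Chamber F, d ∈ M → d.line = l₁ → d = c ∨ d = c' := by
    intro d hd hdl
    have hmem : d ∈ ({c, c'} : Set (Chamber F)) := hset ▸ ⟨hd, hdl⟩
    simpa using hmem
  have hPl : c.pt ≤ l₁ := hcl ▸ c.pt_le_line
  have hP'l : c'.pt ≤ l₁ := hc'l ▸ c'.pt_le_line
  have hlα : l₁ ≤ c.plane := hcl ▸ c.line_le_plane
  have hlα' : l₁ ≤ c'.plane := hc'l ▸ c'.line_le_plane
  have hdisj : ∀ e : Chamber F, e ∈ M → e.line = l₁ → ∀ d : Chamber F, d ∈ M →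
      l₁ ⊓ d.line = ⊥ → (e.pt ≤ d.plane ∨ d.pt ≤ e.plane) := by
    intro e heM hel d hd hbd
    by_contra h
    push_neg at h
    exact hM.1 e heM d hd ⟨h.1, h.2, by rw [hel]; exact hbd⟩
  by_cases hP : c.pt = c'.pt
  · by_cases hα : c.plane = c'.plane
    · exact hcc' (chamber_ext' hP (hcl.trans hc'l.symm) hα)
    · -- same point, different planes
      obtain ⟨β, hβ3, hlβ, hβα, hβα'⟩ := third_plane h₁ c.plane_rank c'.plane_rank hlα hlα' hα
      set cs : Chamber F := ⟨c.pt, l₁, β, c.pt_rank, h₁, hβ3, hPl, hlβ⟩ with hcs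
      have hgood : ∀ d ∈ M, ¬ cs.Opp d := by
        rintro d hd ⟨o1, o2, o3⟩
        have h1d := (hdisj c hcM hcl d hd o3).resolve_left o1
        have h2d := (hdisj c' hc'M hc'l d hd o3).resolve_left (by rw [← hP]; exact o1)
        have hpt : d.pt ≤ l₁ :=
          inf_planes h₁ c.plane_rank c'.plane_rank hlα hlα' hα ▸ le_inf h1d h2d
        exact point_not_le_disjoint d.pt_rank hpt d.pt_le_line o3
      have hcsM : cs ∈ M := hM.2 cs hgood
      rcases honly cs hcsM rfl with h | h
      · exact hβα (congrArg Chamber.plane h)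
      · exact hβα' (congrArg Chamber.plane h)
  · by_cases hα : c.plane = c'.plane
    · -- different points, same plane
      obtain ⟨Q, hQ1, hQl, hQP, hQP'⟩ := third_point c.pt_rank c'.pt_rank h₁ hPl hP'l hP
      set cs : Chamber F := ⟨Q, l₁, c.plane, hQ1, h₁, c.plane_rank, hQl, hlα⟩ with hcs
      have hgood : ∀ d ∈ M, ¬ cs.Opp d := by
        rintro d hd ⟨o1, o2, o3⟩
        have h1d := (hdisj c hcM hcl d hd o3).resolve_right o2
        have h2d := (hdisj c' hc'M hc'l d hd o3).resolve_right (by rw [← hα]; exact o2)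
        have hl1 : l₁ ≤ d.plane :=
          sup_points c.pt_rank c'.pt_rank h₁ hPl hP'l hP ▸ sup_le h1d h2d
        exact not_sup_le_plane o3 h₁ d.line_rank d.plane_rank hl1 d.line_le_plane
      have hcsM : cs ∈ M := hM.2 cs hgood
      rcases honly cs hcsM rfl with h | h
      · exact hQP (congrArg Chamber.pt h)
      · exact hQP' (congrArg Chamber.pt h)
    · -- different points, different planes: at most 2 chambers on l₂
      have hkey : ∀ d : Chamber F, d ∈ M → d.line = l₂ →
          (d.pt = c'.plane ⊓ l₂ ∧ d.plane = c.pt ⊔ l₂) ∨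
          (d.pt = c.plane ⊓ l₂ ∧ d.plane = c'.pt ⊔ l₂) := by
        intro d hd hdl
        have hskew : l₁ ⊓ d.line = ⊥ := by rw [hdl]; exact hbot
        have h1d := hdisj c hcM hcl d hd hskew
        have h2d := hdisj c' hc'M hc'l d hd hskew
        have hdptl₂ : d.pt ≤ l₂ := hdl ▸ d.pt_le_line
        have hl₂pl : l₂ ≤ d.plane := hdl ▸ d.line_le_plane
        rcases h1d with h1 | h1
        · rcases h2d with h2 | h2
          · exact absurd (sup_points c.pt_rank c'.pt_rank h₁ hPl hP'l hP ▸ sup_le h1 h2)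
              (fun h => not_sup_le_plane hbot h₁ h₂ d.plane_rank h hl₂pl)
          · left
            refine ⟨pt_eq_inf d.pt_rank h₁ h₂ c'.plane_rank hlα' hbot h2 hdptl₂, ?_⟩
            have hd2 : c.pt ⊓ l₂ = ⊥ := le_bot_iff.mp (hbot ▸ inf_le_inf_right l₂ hPl)
            exact plane_eq_sup c.pt_rank h₂ d.plane_rank h1 hl₂pl hd2
        · rcases h2d with h2 | h2
          · right
            refine ⟨pt_eq_inf d.pt_rank h₁ h₂ c.plane_rank hlα hbot h1 hdptl₂, ?_⟩
            have hd2 : c'.pt ⊓ l₂ = ⊥ := le_bot_iff.mp (hbot ▸ inf_le_inf_right l₂ hP'l)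
            exact plane_eq_sup c'.pt_rank h₂ d.plane_rank h2 hl₂pl hd2
          · exfalso
            have hpt : d.pt ≤ l₁ :=
              inf_planes h₁ c.plane_rank c'.plane_rank hlα hlα' hα ▸ le_inf h1 h2
            exact point_not_le_disjoint d.pt_rank hpt hdptl₂ hbot
      have hsub : ∀ d ∈ {d ∈ M | d.line = l₂}, (fun d : Chamber F => (d.pt, d.plane)) d ∈
          ({(c'.plane ⊓ l₂, c.pt ⊔ l₂), (c.plane ⊓ l₂, c'.pt ⊔ l₂)} :
            Set (Submodule F (Fin 4 → F) × Submodule F (Fin 4 → F))) := by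
        rintro d ⟨hd, hdl⟩
        rcases hkey d hd hdl with ⟨ha, hb⟩ | ⟨ha, hb⟩ <;>
          simp [Set.mem_insert_iff, Set.mem_singleton_iff, Prod.ext_iff, ha, hb]
      have hinj : Set.InjOn (fun d : Chamber F => (d.pt, d.plane)) {d ∈ M | d.line = l₂} := by
        rintro d ⟨hd, hdl⟩ d' ⟨hd', hdl'⟩ h
        exact chamber_ext' (congrArg Prod.fst h) (hdl.trans hdl'.symm) (congrArg Prod.snd h)
      have hle := Set.ncard_le_ncard_of_injOn _ hsub hinj ((Set.finite_singleton _).insert _)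
      have hle2 : ({(c'.plane ⊓ l₂, c.pt ⊔ l₂), (c.plane ⊓ l₂, c'.pt ⊔ l₂)} :
          Set (Submodule F (Fin 4 → F) × Submodule F (Fin 4 → F))).ncard ≤ 2 := by
        apply le_trans (Set.ncard_insert_le _ _)
        simp
      have hfin : wLine M l₂ ≤ 2 := le_trans hle hle2
      omega
end
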